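/- Let n ≥ 1 and let u be any tempered distribution on ℝⁿ supported in {0}. Then there exist a constant c ∈ ℝ and tempered distributions v₁, …, vₙ on ℝⁿ, each supported in {0}, such that u = c·δ + Σ_{i=1}^{n} ∂ᵢvᵢ. -/

import Mathlib

open MeasureTheory SchwartzMap

noncomputable section

/-- `ℝⁿ` as a Euclidean space. -/
abbrev Euc (n : ℕ) : Type := EuclideanSpace ℝ (Fin n)

/-- A tempered distribution on a real normed space `V`. -/
abbrev TDist (V : Type) [NormedAddCommGroup V] [NormedSpace ℝ V] : Type :=
  SchwartzMap V ℝ →L[ℝ] ℝ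

/-- `u` is supported in the closed set `K`. -/
def SuppIn {V : Type} [NormedAddCommGroup V] [NormedSpace ℝ V]
    (u : TDist V) (K : Set V) : Prop :=
  ∀ φ : SchwartzMap V ℝ, Disjoint (tsupport φ) K → u φ = 0

/-- The distributional directional derivative along `e`: `(∂ₑ u)(φ) = -u(∂ₑ φ)`. -/
def dirDeriv {V : Type} [NormedAddCommGroup V] [NormedSpace ℝ V] (e : V) (u : TDist V) :
    TDist V :=
  -(u.comp (LineDeriv.lineDerivOpCLM ℝ (SchwartzMap V ℝ) e))

/-- The distributional partial derivative `∂ᵢ u` on `ℝⁿ`. -/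
def pDeriv (n : ℕ) (i : Fin n) (u : TDist (Euc n)) : TDist (Euc n) :=
  dirDeriv (EuclideanSpace.single i (1 : ℝ)) u

/-- The Dirac delta distribution at the origin of `ℝⁿ`. -/
def diracDelta (n : ℕ) : TDist (Euc n) := (BoundedContinuousFunction.evalCLM ℝ (0 : Euc n)).comp
  (SchwartzMap.toBoundedContinuousFunctionCLM ℝ (Euc n) ℝ)

/-!
By continuity, `u` is bounded by finitely many Schwartz seminorms, of differentiation order at
most some `N`. If the `N`-jet of `ψ` at `0` vanishes, then `ψ` agrees near `0` with the cut-off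
functions `θ(x / ε) ψ(x)`, whose seminorms of order `≤ N` are `O(ε)` because
`‖Dⁱψ(x)‖ = O(‖x‖ ^ (N + 1 - i))`; so `u ψ = 0`. Hence `u` vanishes on the common kernel of
the finitely many functionals `φ ↦ ∂^I φ(0)`, `|I| ≤ N`, and is a linear combination of them.
For `I = ∅` this functional is `δ`; otherwise peeling off the last derivative writes it as
`∂ᵢ w` with `w` supported at `0`.
-/

open LineDeriv Filter Topology Metric
open scoped ContDiff

universe u

section Taylor

variable {E F : Type u} [NormedAddCommGroup E] [NormedSpace ℝ E] [NormedAddCommGroup F]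
  [NormedSpace ℝ F]

theorem norm_iteratedFDeriv_le_of_iteratedFDeriv_eq_zero {m i : ℕ} (hi : i ≤ m) {f : E → F}
    (hf : ContDiff ℝ ∞ f) (h0 : ∀ j < m, iteratedFDeriv ℝ j f 0 = 0) {C : ℝ} {x : E}
    (hC : ∀ y, ‖y‖ ≤ ‖x‖ → ‖iteratedFDeriv ℝ m f y‖ ≤ C) :
    ‖iteratedFDeriv ℝ i f x‖ ≤ C * ‖x‖ ^ (m - i) := by
  induction m generalizing F f i x with
  | zero =>
    obtain rfl : i = 0 := by omega
    simpa using hC x le_rfl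
  | succ m ih =>
    have hf' : ContDiff ℝ ∞ (fderiv ℝ f) := hf.fderiv_right (by simp)
    have h0' (j : ℕ) (hj : j < m) : iteratedFDeriv ℝ j (fderiv ℝ f) 0 = 0 := by
      rw [← norm_eq_zero, norm_iteratedFDeriv_fderiv, h0 (j + 1) (by omega), norm_zero]
    have hC' (y : E) (hy : ‖y‖ ≤ ‖x‖) : ‖iteratedFDeriv ℝ m (fderiv ℝ f) y‖ ≤ C := by
      rw [norm_iteratedFDeriv_fderiv]
      exact hC y hy
    cases i with
    | succ i =>
      rw [← norm_iteratedFDeriv_fderiv, Nat.add_sub_add_right]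
      exact ih (f := fderiv ℝ f) (i := i) (x := x) (by omega) hf' h0' hC'
    | zero =>
      have hC0 : 0 ≤ C := (norm_nonneg _).trans (hC 0 (by simp))
      have hDf (y : E) (hy : y ∈ closedBall 0 ‖x‖) : ‖fderiv ℝ f y‖ ≤ C * ‖x‖ ^ m := by
        rw [mem_closedBall_zero_iff] at hy
        calc ‖fderiv ℝ f y‖ ≤ C * ‖y‖ ^ m := by
              simpa using ih (f := fderiv ℝ f) (i := 0) (x := y) (Nat.zero_le _) hf' h0'
                fun z hz => hC' z (hz.trans hy)
          _ ≤ C * ‖x‖ ^ m := by gcongr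
      have hf0 : f 0 = 0 := by
        rw [← norm_eq_zero, ← norm_iteratedFDeriv_zero (𝕜 := ℝ), h0 0 (by omega), norm_zero]
      have := (convex_closedBall (0 : E) ‖x‖).norm_image_sub_le_of_norm_fderiv_le
        (fun y _ => (hf.differentiable (by simp)).differentiableAt) hDf
        (mem_closedBall_self (norm_nonneg x)) (mem_closedBall_zero_iff.2 le_rfl)
      simpa [hf0, pow_succ, mul_assoc] using this

end Taylor

section Cutoff

variable {E : Type u} [NormedAddCommGroup E] [NormedSpace ℝ E] [FiniteDimensional ℝ E]

variable (E) in
def unitBump : ContDiffBump (0 : E) := ⟨1, 2, one_pos, one_lt_two⟩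

def cutoff (ε : ℝ) (x : E) : ℝ := unitBump E (ε⁻¹ • x)

theorem contDiff_cutoff (ε : ℝ) : ContDiff ℝ ∞ (cutoff ε : E → ℝ) :=
  (unitBump E).contDiff.comp (contDiff_const_smul _)

theorem cutoff_eq_one {ε : ℝ} (hε : 0 < ε) {x : E} (hx : ‖x‖ ≤ ε) : cutoff ε x = 1 :=
  ContDiffBump.one_of_mem_closedBall _ <| by
    rw [mem_closedBall_zero_iff, norm_smul, norm_inv, Real.norm_of_nonneg hε.le]
    exact inv_mul_le_one_of_le₀ hx hε.le

theorem tsupport_cutoff_subset {ε : ℝ} (hε : 0 < ε) :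
    tsupport (cutoff ε : E → ℝ) ⊆ closedBall 0 (2 * ε) := by
  refine closure_minimal (fun x hx => ?_) isClosed_closedBall
  rw [mem_closedBall_zero_iff]
  by_contra! h
  refine hx (ContDiffBump.zero_of_le_dist _ ?_)
  rw [dist_zero_right, norm_smul, norm_inv, Real.norm_of_nonneg hε.le, le_inv_mul_iff₀ hε,
    mul_comm]
  exact h.le

theorem hasTemperateGrowth_cutoff {ε : ℝ} (hε : 0 < ε) :
    (cutoff ε : E → ℝ).HasTemperateGrowth :=
  HasCompactSupport.hasTemperateGrowth
    ((isCompact_closedBall 0 (2 * ε)).of_isClosed_subset (isClosed_tsupport _)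
      (tsupport_cutoff_subset hε))
    (contDiff_cutoff ε)

theorem exists_norm_iteratedFDeriv_cutoff_le (l : ℕ) :
    ∃ K, ∀ ε > 0, ∀ j ≤ l, ∀ x : E, ‖iteratedFDeriv ℝ j (cutoff ε) x‖ ≤ K * ε⁻¹ ^ j := by
  set θ := unitBump E
  have hbdd : BddAbove (⋃ j ∈ Set.Iic l, Set.range fun x => ‖iteratedFDeriv ℝ j θ x‖) :=
    (Set.finite_Iic l).bddAbove_biUnion.2 fun j _ =>
      (θ.contDiff.continuous_iteratedFDeriv (mod_cast le_top)).norm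
        |>.bddAbove_range_of_hasCompactSupport (θ.hasCompactSupport.iteratedFDeriv j).norm
  obtain ⟨K, hK⟩ := hbdd
  refine ⟨K, fun ε hε j hj x => ?_⟩
  have hθ : ‖iteratedFDeriv ℝ j θ (ε⁻¹ • x)‖ ≤ K :=
    hK (Set.mem_biUnion (Set.mem_Iic.2 hj) ⟨_, rfl⟩)
  change ‖iteratedFDeriv ℝ j (fun x => θ (ε⁻¹ • x)) x‖ ≤ _
  rw [iteratedFDeriv_comp_const_smul _ θ.contDiff, norm_smul, norm_pow, norm_inv,
    Real.norm_of_nonneg hε.le, mul_comm]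
  gcongr

end Cutoff

section Estimate

variable {E F : Type u} [NormedAddCommGroup E] [NormedSpace ℝ E] [FiniteDimensional ℝ E]
  [NormedAddCommGroup F] [NormedSpace ℝ F]

theorem norm_iteratedFDeriv_cutoff_smul_le {N l : ℕ} (hl : l ≤ N) {ψ : 𝓢(E, F)}
    (hψ : ∀ j ≤ N, iteratedFDeriv ℝ j ψ 0 = 0) {K ε : ℝ} (hε : 0 < ε) (hε1 : ε ≤ 1)
    (hK : ∀ j ≤ l, ∀ x : E, ‖iteratedFDeriv ℝ j (cutoff ε) x‖ ≤ K * ε⁻¹ ^ j)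
    {x : E} (hx : ‖x‖ ≤ 2 * ε) :
    ‖iteratedFDeriv ℝ l (fun y => cutoff ε y • ψ y) x‖ ≤
      2 ^ l * (K * SchwartzMap.seminorm ℝ 0 (N + 1) ψ * 2 ^ (N + 1) * ε) := by
  set B := SchwartzMap.seminorm ℝ 0 (N + 1) ψ
  have hK0 : 0 ≤ K := by simpa using (norm_nonneg _).trans (hK 0 (Nat.zero_le _) x)
  have hB0 : 0 ≤ B := apply_nonneg _ _
  have hterm (i : ℕ) (hi : i ≤ l) :
      ‖iteratedFDeriv ℝ i (cutoff ε) x‖ * ‖iteratedFDeriv ℝ (l - i) ψ x‖ ≤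
        K * B * 2 ^ (N + 1) * ε := by
    have hψx : ‖iteratedFDeriv ℝ (l - i) ψ x‖ ≤ B * ‖x‖ ^ (N + 1 - (l - i)) :=
      norm_iteratedFDeriv_le_of_iteratedFDeriv_eq_zero (by omega) (ψ.smooth ⊤)
        (fun j hj => hψ j (by omega)) fun y _ => ψ.norm_iteratedFDeriv_le_seminorm ℝ _ y
    -- each derivative falling on the cutoff costs `ε⁻¹`, each order of vanishing of `ψ` at `0`
    -- gains `ε`, and `l ≤ N` leaves one `ε` over
    have hpow : ε⁻¹ ^ i * ‖x‖ ^ (N + 1 - (l - i)) ≤ 2 ^ (N + 1) * ε :=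
      calc ε⁻¹ ^ i * ‖x‖ ^ (N + 1 - (l - i))
          ≤ ε⁻¹ ^ i * (2 * ε) ^ (i + (N - l) + 1) := by
            rw [show N + 1 - (l - i) = i + (N - l) + 1 by omega]; gcongr
        _ = 2 ^ (i + (N - l) + 1) * ε ^ (N - l) * ε * (ε⁻¹ * ε) ^ i := by ring
        _ = 2 ^ (i + (N - l) + 1) * ε ^ (N - l) * ε := by
            rw [inv_mul_cancel₀ hε.ne', one_pow, mul_one]
        _ ≤ 2 ^ (N + 1) * 1 * ε := by
            gcongr
            · exact one_le_two
            · omega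
            · exact pow_le_one₀ hε.le hε1
        _ = 2 ^ (N + 1) * ε := by ring
    calc ‖iteratedFDeriv ℝ i (cutoff ε) x‖ * ‖iteratedFDeriv ℝ (l - i) ψ x‖
        ≤ K * ε⁻¹ ^ i * (B * ‖x‖ ^ (N + 1 - (l - i))) :=
          mul_le_mul (hK i hi x) hψx (norm_nonneg _) (by positivity)
      _ = K * B * (ε⁻¹ ^ i * ‖x‖ ^ (N + 1 - (l - i))) := by ring
      _ ≤ K * B * (2 ^ (N + 1) * ε) := by gcongr
      _ = K * B * 2 ^ (N + 1) * ε := by ring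
  calc ‖iteratedFDeriv ℝ l (fun y => cutoff ε y • ψ y) x‖
      ≤ ∑ i ∈ Finset.range (l + 1), (l.choose i : ℝ) *
          ‖iteratedFDeriv ℝ i (cutoff ε) x‖ * ‖iteratedFDeriv ℝ (l - i) ψ x‖ :=
        norm_iteratedFDeriv_smul_le (contDiff_cutoff ε) (ψ.smooth ⊤) x (mod_cast le_top)
    _ ≤ ∑ i ∈ Finset.range (l + 1), (l.choose i : ℝ) * (K * B * 2 ^ (N + 1) * ε) :=
        Finset.sum_le_sum fun i hi => by
          rw [mul_assoc]
          exact mul_le_mul_of_nonneg_left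
            (hterm i (Nat.lt_succ_iff.1 (Finset.mem_range.1 hi))) (Nat.cast_nonneg _)
    _ = 2 ^ l * (K * B * 2 ^ (N + 1) * ε) := by
        rw [← Finset.sum_mul, ← Nat.cast_sum, Nat.sum_range_choose]
        push_cast
        ring

theorem exists_seminorm_cutoff_smul_le {N l : ℕ} (hl : l ≤ N) (k : ℕ) {ψ : 𝓢(E, F)}
    (hψ : ∀ j ≤ N, iteratedFDeriv ℝ j ψ 0 = 0) :
    ∃ A, ∀ ε, 0 < ε → ε ≤ 1 →
      SchwartzMap.seminorm ℝ k l (smulLeftCLM F (cutoff ε) ψ) ≤ A * ε := by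
  obtain ⟨K, hK⟩ := exists_norm_iteratedFDeriv_cutoff_le (E := E) l
  set B := SchwartzMap.seminorm ℝ 0 (N + 1) ψ
  refine ⟨2 ^ k * 2 ^ l * K * B * 2 ^ (N + 1), fun ε hε hε1 => ?_⟩
  have hK0 : 0 ≤ K := by simpa using (norm_nonneg _).trans (hK ε hε 0 (Nat.zero_le _) 0)
  have hB0 : 0 ≤ B := apply_nonneg _ _
  refine seminorm_le_bound ℝ k l _ (by positivity) fun x => ?_
  rw [smulLeftCLM_apply (hasTemperateGrowth_cutoff hε)]
  rcases le_or_gt ‖x‖ (2 * ε) with hx | hx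
  · calc ‖x‖ ^ k * ‖iteratedFDeriv ℝ l (fun y => cutoff ε y • ψ y) x‖
        ≤ 2 ^ k * (2 ^ l * (K * B * 2 ^ (N + 1) * ε)) := by
          gcongr
          · linarith
          · exact norm_iteratedFDeriv_cutoff_smul_le hl hψ hε hε1 (hK ε hε) hx
      _ = 2 ^ k * 2 ^ l * K * B * 2 ^ (N + 1) * ε := by ring
  · have hx' : x ∉ tsupport fun y => cutoff ε y • ψ y := fun h => by
      have := tsupport_cutoff_subset hε (tsupport_smul_subset_left _ _ h)
      rw [mem_closedBall_zero_iff] at this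
      linarith
    rw [Function.notMem_support.1 fun h => hx' (support_iteratedFDeriv_subset l h), norm_zero,
      mul_zero]
    positivity

theorem tendsto_seminorm_cutoff_smul {N l : ℕ} (hl : l ≤ N) (k : ℕ) {ψ : 𝓢(E, F)}
    (hψ : ∀ j ≤ N, iteratedFDeriv ℝ j ψ 0 = 0) :
    Tendsto (fun ε => SchwartzMap.seminorm ℝ k l (smulLeftCLM F (cutoff ε) ψ)) (𝓝[>] 0)
      (𝓝 0) := by
  obtain ⟨A, hA⟩ := exists_seminorm_cutoff_smul_le hl k hψ
  have hAε : Tendsto (fun ε : ℝ => A * ε) (𝓝[>] 0) (𝓝 0) := by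
    simpa using ((continuous_const_mul A).tendsto 0).mono_left nhdsWithin_le_nhds
  refine squeeze_zero' (Eventually.of_forall fun _ => apply_nonneg _ _) ?_ hAε
  filter_upwards [Ioc_mem_nhdsGT one_pos] with ε hε using hA ε hε.1 hε.2

end Estimate

section Support

variable {V : Type} [NormedAddCommGroup V] [NormedSpace ℝ V]

theorem SuppIn.apply_eq_of_eventuallyEq {u : TDist V} {x : V} (hu : SuppIn u {x})
    {φ ψ : 𝓢(V, ℝ)} (h : φ =ᶠ[𝓝 x] ψ) : u φ = u ψ := by
  rw [← sub_eq_zero, ← map_sub]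
  refine hu _ (Set.disjoint_singleton_right.2 ?_)
  rw [notMem_tsupport_iff_eventuallyEq]
  filter_upwards [h] with y hy
  simp [hy]

theorem SuppIn.comp_iteratedLineDerivOpCLM {u : TDist V} {K : Set V} (hu : SuppIn u K) {m : ℕ}
    (v : Fin m → V) : SuppIn (u.comp (iteratedLineDerivOpCLM ℝ 𝓢(V, ℝ) v)) K :=
  fun φ hφ => hu _ (hφ.mono_left (tsupport_iteratedLineDerivOp_subset v φ))

variable (V) in
def suppInSubmodule (K : Set V) : Submodule ℝ (TDist V) where
  carrier := {u | SuppIn u K}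
  add_mem' hu hv φ hφ := by simp [hu φ hφ, hv φ hφ]
  zero_mem' _ _ := rfl
  smul_mem' c u hu φ hφ := by simp [hu φ hφ]

@[simp]
theorem mem_suppInSubmodule {u : TDist V} {K : Set V} : u ∈ suppInSubmodule V K ↔ SuppIn u K :=
  Iff.rfl

theorem SuppIn.exists_apply_eq_zero_of_iteratedFDeriv_eq_zero [FiniteDimensional ℝ V]
    {u : TDist V} (hu : SuppIn u {0}) :
    ∃ N, ∀ ψ : 𝓢(V, ℝ), (∀ j ≤ N, iteratedFDeriv ℝ j ψ 0 = 0) → u ψ = 0 := by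
  obtain ⟨s, C, -, hC⟩ := Seminorm.bound_of_continuous (schwartz_withSeminorms ℝ V ℝ)
    ((normSeminorm ℝ ℝ).comp u.toLinearMap) (continuous_norm.comp u.continuous)
  refine ⟨s.sup Prod.snd, fun ψ hψ => ?_⟩
  set bound := fun ε => (C : ℝ) * ∑ p ∈ s, SchwartzMap.seminorm ℝ p.1 p.2
    (smulLeftCLM ℝ (cutoff ε) ψ)
  have hbound (ε : ℝ) (hε : 0 < ε) : ‖u ψ‖ ≤ bound ε := by
    have hloc : ψ =ᶠ[𝓝 0] smulLeftCLM ℝ (cutoff ε) ψ := by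
      filter_upwards [closedBall_mem_nhds 0 hε] with x hx
      rw [smulLeftCLM_apply_apply (hasTemperateGrowth_cutoff hε),
        cutoff_eq_one hε (mem_closedBall_zero_iff.1 hx), one_smul]
    rw [hu.apply_eq_of_eventuallyEq hloc]
    refine (hC _).trans ?_
    rw [_root_.smul_apply, NNReal.smul_def, smul_eq_mul]
    refine mul_le_mul_of_nonneg_left ?_ C.2
    exact Seminorm.finset_sup_apply_le (Finset.sum_nonneg fun _ _ => apply_nonneg _ _)
      fun p hp => Finset.single_le_sum (fun _ _ => apply_nonneg _ _) hp
  have hlim : Tendsto bound (𝓝[>] 0) (𝓝 0) := by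
    simpa [bound] using (tendsto_finsetSum s fun p hp =>
      tendsto_seminorm_cutoff_smul (Finset.le_sup hp) p.1 hψ).const_mul (C : ℝ)
  exact norm_le_zero_iff.1 <| ge_of_tendsto hlim <|
    eventually_nhdsWithin_of_forall fun ε hε => hbound ε hε

end Support

theorem ContinuousMultilinearMap.eq_zero_of_apply_single {ι F : Type*} [Fintype ι] [DecidableEq ι]
    [NormedAddCommGroup F] [NormedSpace ℝ F] {m : ℕ}
    (f : ContinuousMultilinearMap ℝ (fun _ : Fin m => EuclideanSpace ℝ ι) F)
    (h : ∀ I : Fin m → ι, f (fun k => EuclideanSpace.single (I k) (1 : ℝ)) = 0) : f = 0 := by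
  refine ContinuousMultilinearMap.toMultilinearMap_injective <|
    Module.Basis.ext_multilinear (fun _ => (EuclideanSpace.basisFun ι ℝ).toBasis) fun I => ?_
  simpa using h I

section Jets

variable {n : ℕ}

theorem diracDelta_apply (φ : 𝓢(Euc n, ℝ)) : diracDelta n φ = φ 0 := rfl

theorem suppIn_diracDelta : SuppIn (diracDelta n) {0} := fun φ hφ => by
  rw [diracDelta_apply]
  exact image_eq_zero_of_notMem_tsupport (Set.disjoint_singleton_right.1 hφ)

/-- `φ ↦ ∂^I φ (0)`, that is `(-1)^m δ^{(α)}` where `α i` is the number of occurrences of `i`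
in `I`. -/
def partialAtZero (n : ℕ) {m : ℕ} (I : Fin m → Fin n) : TDist (Euc n) :=
  (diracDelta n).comp
    (iteratedLineDerivOpCLM ℝ 𝓢(Euc n, ℝ) fun k => EuclideanSpace.single (I k) (1 : ℝ))

theorem partialAtZero_apply {m : ℕ} (I : Fin m → Fin n) (φ : 𝓢(Euc n, ℝ)) :
    partialAtZero n I φ = iteratedFDeriv ℝ m φ 0 fun k => EuclideanSpace.single (I k) (1 : ℝ) :=
  iteratedLineDerivOp_eq_iteratedFDeriv

theorem partialAtZero_fin_zero (I : Fin 0 → Fin n) : partialAtZero n I = diracDelta n := rfl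

theorem partialAtZero_succ {m : ℕ} (I : Fin (m + 1) → Fin n) :
    partialAtZero n I = pDeriv n (I (Fin.last m)) (-partialAtZero n (Fin.init I)) := by
  ext φ
  simp only [partialAtZero, pDeriv, dirDeriv, neg_apply, ContinuousLinearMap.comp_apply, neg_neg,
    iteratedLineDerivOpCLM_apply, lineDerivOpCLM_apply, iteratedLineDerivOp_succ_right]
  rfl

theorem suppIn_partialAtZero {m : ℕ} (I : Fin m → Fin n) : SuppIn (partialAtZero n I) {0} :=
  suppIn_diracDelta.comp_iteratedLineDerivOpCLM _

theorem SuppIn.mem_span_partialAtZero {u : TDist (Euc n)} (hu : SuppIn u {0}) :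
    u ∈ Submodule.span ℝ (Set.range fun I : Σ m, Fin m → Fin n => partialAtZero n I.2) := by
  obtain ⟨N, hN⟩ := hu.exists_apply_eq_zero_of_iteratedFDeriv_eq_zero
  have hker : ⨅ I : Σ m : Fin (N + 1), Fin m → Fin n,
      LinearMap.ker (partialAtZero n I.2 : 𝓢(Euc n, ℝ) →ₗ[ℝ] ℝ) ≤
        LinearMap.ker (u : 𝓢(Euc n, ℝ) →ₗ[ℝ] ℝ) := by
    intro φ hφ
    simp only [Submodule.mem_iInf, LinearMap.mem_ker, ContinuousLinearMap.coe_coe] at hφ ⊢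
    refine hN φ fun j hj => ContinuousMultilinearMap.eq_zero_of_apply_single _ fun I => ?_
    rw [← partialAtZero_apply]
    exact hφ ⟨⟨j, Nat.lt_succ_of_le hj⟩, I⟩
  obtain ⟨c, hc⟩ := (Submodule.mem_span_range_iff_exists_fun ℝ).1 (mem_span_of_iInf_ker_le_ker hker)
  have hu_eq : u = ∑ I, c I • partialAtZero n I.2 := by
    ext φ
    simpa using (LinearMap.congr_fun hc φ).symm
  rw [hu_eq]
  exact Submodule.sum_mem _ fun I _ =>
    Submodule.smul_mem _ _ (Submodule.subset_span ⟨⟨I.1, I.2⟩, rfl⟩)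

end Jets

section Divergence

variable (n : ℕ)

def pDerivₗ (i : Fin n) : TDist (Euc n) →ₗ[ℝ] TDist (Euc n) where
  toFun := pDeriv n i
  map_add' _ _ := by ext; simp [pDeriv, dirDeriv, add_comm]
  map_smul' _ _ := by ext; simp [pDeriv, dirDeriv]

def divergenceₗ : (Fin n → TDist (Euc n)) →ₗ[ℝ] TDist (Euc n) :=
  ∑ i, (pDerivₗ n i).comp (LinearMap.proj i)

def divergencesSuppInZero : Submodule ℝ (TDist (Euc n)) :=
  (Submodule.pi Set.univ fun _ => suppInSubmodule (Euc n) {0}).map (divergenceₗ n)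

variable {n}

theorem pDerivₗ_apply (i : Fin n) (u : TDist (Euc n)) : pDerivₗ n i u = pDeriv n i u := rfl

theorem divergenceₗ_apply (v : Fin n → TDist (Euc n)) :
    divergenceₗ n v = ∑ i, pDeriv n i (v i) := by
  simp [divergenceₗ, pDerivₗ_apply]

theorem pDeriv_mem_divergencesSuppInZero {w : TDist (Euc n)} (hw : SuppIn w {0}) (i : Fin n) :
    pDeriv n i w ∈ divergencesSuppInZero n := by
  refine ⟨Pi.single i w, fun j _ => ?_, ?_⟩
  · rcases eq_or_ne j i with rfl | hj
    · simpa using hw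
    · simp [hj]
  · rw [divergenceₗ_apply, Finset.sum_eq_single i (fun j _ hj => ?_) (by simp),
      Pi.single_eq_same]
    rw [Pi.single_eq_of_ne hj, ← pDerivₗ_apply, map_zero]

theorem partialAtZero_mem_span_diracDelta_sup {m : ℕ} (I : Fin m → Fin n) :
    partialAtZero n I ∈ (ℝ ∙ diracDelta n) ⊔ divergencesSuppInZero n := by
  cases m with
  | zero =>
    rw [partialAtZero_fin_zero]
    exact Submodule.mem_sup_left (Submodule.mem_span_singleton_self _)
  | succ m =>
    rw [partialAtZero_succ]
    exact Submodule.mem_sup_right (pDeriv_mem_divergencesSuppInZero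
      ((suppInSubmodule (Euc n) {0}).neg_mem (suppIn_partialAtZero _)) _)

end Divergence

theorem dist_at_origin_eq_delta_add_divergence_general (n : ℕ) (u : TDist (Euc n))
    (hu : SuppIn u ({0} : Set (Euc n))) :
    ∃ (c : ℝ) (v : Fin n → TDist (Euc n)),
      (∀ i : Fin n, SuppIn (v i) ({0} : Set (Euc n))) ∧
      u = c • diracDelta n + ∑ i : Fin n, pDeriv n i (v i) := by
  have hu' : u ∈ (ℝ ∙ diracDelta n) ⊔ divergencesSuppInZero n := by
    refine Submodule.span_le.2 ?_ hu.mem_span_partialAtZero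
    rintro _ ⟨I, rfl⟩
    exact partialAtZero_mem_span_diracDelta_sup I.2
  obtain ⟨y, hy, z, hz, hyz⟩ := Submodule.mem_sup.1 hu'
  obtain ⟨c, rfl⟩ := Submodule.mem_span_singleton.1 hy
  obtain ⟨v, hv, rfl⟩ := hz
  exact ⟨c, v, fun i => hv i (Set.mem_univ i), by rw [← hyz, divergenceₗ_apply]⟩

/-- Any tempered distribution on `ℝⁿ` (`n ≥ 1`) supported in `{0}` is, modulo a multiple
of the Dirac delta, a sum of first derivatives of distributions supported in `{0}`:
`u = c·δ + ∑ᵢ ∂ᵢvᵢ`. -/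
theorem dist_at_origin_eq_delta_add_divergence (n : ℕ) (hn : 1 ≤ n) (u : TDist (Euc n))
    (hu : SuppIn u ({0} : Set (Euc n))) :
    ∃ (c : ℝ) (v : Fin n → TDist (Euc n)),
      (∀ i : Fin n, SuppIn (v i) ({0} : Set (Euc n))) ∧
      u = c • diracDelta n + ∑ i : Fin n, pDeriv n i (v i) :=
  dist_at_origin_eq_delta_add_divergence_general n u hu
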